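/- arXiv:2503.18075 — 4 statements merged into one kernel-verified Lean document; each statement's English description precedes it below -/
import Mathlib

section
/- Rejection-free sampling correctness: let q be a density on ℝ^d symmetric about μ and w a skewing function with w(θ) = 1 - w(2μ - θ), 0 ≤ w ≤ 1. If X has density q and U is uniform on [0,1] independent of X, then the random variable Y defined by Y = X if U ≤ w(X) and Y = 2μ - X if U > w(X) has density 2 q(θ) w(θ). -/
/-!
Given `X = θ`, the output is `θ` with probability `w θ` and `σ θ = 2μ - θ` with probability
`1 - w θ = w (σ θ)`. Since `σ` preserves the law `ν` of `X`, the second alternative contributes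
`∫_A w dν` to `P(Y ∈ A)`, exactly as the first one does. Hence `Y` has density `2 w` with respect
to `ν`, that is `2 q w` with respect to Lebesgue measure.
-/

open MeasureTheory ProbabilityTheory Set

section

variable {E : Type*} [MeasurableSpace E]

theorem MeasureTheory.MeasurePreserving.withDensity_of_comp_eq {μ : Measure E} {σ : E → E}
    (hσ : MeasurePreserving σ μ μ) {g : E → ENNReal} (hg : Measurable g)
    (hgσ : ∀ x, g (σ x) = g x) :
    MeasurePreserving σ (μ.withDensity g) (μ.withDensity g) := by
  refine ⟨hσ.measurable, Measure.ext fun s hs => ?_⟩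
  rw [Measure.map_apply hσ.measurable hs, withDensity_apply _ hs,
    withDensity_apply _ (hσ.measurable hs)]
  calc ∫⁻ x in σ ⁻¹' s, g x ∂μ = ∫⁻ x in σ ⁻¹' s, g (σ x) ∂μ := by simp only [hgσ]
    _ = ∫⁻ x in s, g x ∂μ := hσ.setLIntegral_comp_preimage hs hg

theorem map_ite_le_uniform {a : ℝ} (ha0 : 0 ≤ a) (ha1 : a ≤ 1) (x y : E) :
    (volume.restrict (Icc (0 : ℝ) 1)).map (fun u => if u ≤ a then x else y)
      = ENNReal.ofReal a • Measure.dirac x + ENNReal.ofReal (1 - a) • Measure.dirac y := by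
  ext s hs
  have hm : Measurable fun u : ℝ => if u ≤ a then x else y :=
    Measurable.ite measurableSet_Iic measurable_const measurable_const
  rw [Measure.map_apply hm hs, Measure.add_apply, Measure.smul_apply, Measure.smul_apply,
    Measure.dirac_apply' _ hs, Measure.dirac_apply' _ hs,
    Measure.restrict_apply' measurableSet_Icc]
  by_cases hx : x ∈ s <;> by_cases hy : y ∈ s
  · have : (fun u => if u ≤ a then x else y) ⁻¹' s ∩ Icc 0 1 = Icc 0 1 := by
      ext u; by_cases h : u ≤ a <;> simp [h, hx, hy]
    simp [this, hx, hy, ← ENNReal.ofReal_add ha0 (sub_nonneg.2 ha1)]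
  · have : (fun u => if u ≤ a then x else y) ⁻¹' s ∩ Icc 0 1 = Icc 0 a := by
      ext u; by_cases h : u ≤ a <;> simp [h, hx, hy]; grind
    simp [this, hx, hy]
  · have : (fun u => if u ≤ a then x else y) ⁻¹' s ∩ Icc 0 1 = Ioc a 1 := by
      ext u; by_cases h : u ≤ a <;> simp [h, hx, hy]; grind
    simp [this, hx, hy]
  · have : (fun u => if u ≤ a then x else y) ⁻¹' s ∩ Icc 0 1 = ∅ := by
      ext u; by_cases h : u ≤ a <;> simp [h, hx, hy]
    simp [this, hx, hy]

noncomputable def skewReflect (w : E → ℝ) (σ : E → E) (p : E × ℝ) : E :=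
  if p.2 ≤ w p.1 then p.1 else σ p.1

theorem measurable_skewReflect {w : E → ℝ} (hw : Measurable w) {σ : E → E} (hσ : Measurable σ) :
    Measurable (skewReflect w σ) :=
  Measurable.ite (measurableSet_le measurable_snd (hw.comp measurable_fst)) measurable_fst
    (hσ.comp measurable_fst)

theorem map_skewReflect_prod_uniform {ν : Measure E} {σ : E → E}
    (hσ : MeasurePreserving σ ν ν) {w : E → ℝ} (hw : Measurable w) (hw0 : ∀ x, 0 ≤ w x)
    (hw1 : ∀ x, w x ≤ 1) (hwσ : ∀ x, w x + w (σ x) = 1) :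
    (ν.prod (volume.restrict (Icc (0 : ℝ) 1))).map (skewReflect w σ)
      = ν.withDensity (fun x => ENNReal.ofReal (2 * w x)) := by
  have hf := measurable_skewReflect hw hσ.measurable
  ext s hs
  set g : E → ENNReal := fun x => ENNReal.ofReal (w x) * s.indicator 1 x
  have hg : Measurable g := hw.ennreal_ofReal.mul (measurable_one.indicator hs)
  have hslice : ∀ x, volume.restrict (Icc (0 : ℝ) 1) (Prod.mk x ⁻¹' (skewReflect w σ ⁻¹' s))
      = g x + g (σ x) := by
    intro x
    have h := map_ite_le_uniform (hw0 x) (hw1 x) x (σ x)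
    rw [← eq_sub_iff_add_eq'.2 (hwσ x)] at h
    calc _ = (volume.restrict (Icc (0 : ℝ) 1)).map (fun u => skewReflect w σ (x, u)) s :=
          (Measure.map_apply (hf.comp measurable_prodMk_left) hs).symm
      _ = g x + g (σ x) := by simp [skewReflect, h, g, Measure.dirac_apply' _ hs]
  rw [Measure.map_apply hf hs, Measure.prod_apply (hf hs), lintegral_congr hslice,
    lintegral_add_left hg, hσ.lintegral_comp hg, ← two_mul, ← lintegral_const_mul 2 hg,
    withDensity_apply _ hs, ← lintegral_indicator hs]
  refine lintegral_congr fun x => ?_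
  by_cases hx : x ∈ s <;> simp [g, hx, ENNReal.ofReal_mul]

end

theorem stmt_4_general {d : ℕ} {Ω : Type*} [MeasureSpace Ω] (P : Measure Ω) [IsProbabilityMeasure P]
    (q w : (Fin d → ℝ) → ℝ) (μ : Fin d → ℝ)
    (hq_meas : Measurable q) (hq_nonneg : ∀ θ, 0 ≤ q θ)
    (hq_sym : ∀ θ, q ((2 : ℝ) • μ - θ) = q θ)
    (hw_meas : Measurable w) (hw0 : ∀ θ, 0 ≤ w θ) (hw1 : ∀ θ, w θ ≤ 1)
    (hw_sym : ∀ θ, w θ + w ((2 : ℝ) • μ - θ) = 1)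
    (X : Ω → (Fin d → ℝ)) (U : Ω → ℝ)
    (hX_meas : Measurable X) (hU_meas : Measurable U)
    (hX_law : Measure.map X P = volume.withDensity (fun θ => ENNReal.ofReal (q θ)))
    (hU_law : Measure.map U P = volume.restrict (Set.Icc (0 : ℝ) 1))
    (hindep : IndepFun X U P)
    (Y : Ω → (Fin d → ℝ))
    (hY : ∀ ω, Y ω = if U ω ≤ w (X ω) then X ω else (2 : ℝ) • μ - X ω) :
    Measure.map Y P = volume.withDensity (fun θ => ENNReal.ofReal (2 * q θ * w θ)) := by
  set c : Fin d → ℝ := (2 : ℝ) • μ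
  have hreflect : MeasurePreserving (fun θ => c - θ)
      (volume.withDensity fun θ => ENNReal.ofReal (q θ))
      (volume.withDensity fun θ => ENNReal.ofReal (q θ)) :=
    (Measure.measurePreserving_sub_left volume c).withDensity_of_comp_eq hq_meas.ennreal_ofReal
      fun θ => by rw [hq_sym]
  have hY' : Y = skewReflect w (fun θ => c - θ) ∘ fun ω => (X ω, U ω) := funext hY
  rw [hY', ← Measure.map_map (measurable_skewReflect hw_meas hreflect.measurable)
      (hX_meas.prodMk hU_meas),
    (indepFun_iff_map_prod_eq_prod_map_map hX_meas.aemeasurable hU_meas.aemeasurable).1 hindep,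
    hX_law, hU_law, map_skewReflect_prod_uniform hreflect hw_meas hw0 hw1 hw_sym,
    ← withDensity_mul _ hq_meas.ennreal_ofReal (hw_meas.const_mul 2).ennreal_ofReal]
  congr 1
  funext θ
  rw [Pi.mul_apply, ← ENNReal.ofReal_mul (hq_nonneg θ), mul_left_comm, mul_assoc]

theorem stmt_4 {d : ℕ} {Ω : Type*} [MeasureSpace Ω] (P : Measure Ω) [IsProbabilityMeasure P]
    (q w : (Fin d → ℝ) → ℝ) (μ : Fin d → ℝ)
    (hq_meas : Measurable q) (hq_nonneg : ∀ θ, 0 ≤ q θ)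
    (hq_int : ∫ θ, q θ = 1)
    (hq_sym : ∀ θ, q ((2 : ℝ) • μ - θ) = q θ)
    (hw_meas : Measurable w) (hw0 : ∀ θ, 0 ≤ w θ) (hw1 : ∀ θ, w θ ≤ 1)
    (hw_sym : ∀ θ, w θ + w ((2 : ℝ) • μ - θ) = 1)
    (X : Ω → (Fin d → ℝ)) (U : Ω → ℝ)
    (hX_meas : Measurable X) (hU_meas : Measurable U)
    (hX_law : Measure.map X P = volume.withDensity (fun θ => ENNReal.ofReal (q θ)))
    (hU_law : Measure.map U P = volume.restrict (Set.Icc (0 : ℝ) 1))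
    (hindep : IndepFun X U P)
    (Y : Ω → (Fin d → ℝ))
    (hY : ∀ ω, Y ω = if U ω ≤ w (X ω) then X ω else (2 : ℝ) • μ - X ω) :
    Measure.map Y P = volume.withDensity (fun θ => ENNReal.ofReal (2 * q θ * w θ)) :=
  stmt_4_general P q w μ hq_meas hq_nonneg hq_sym hw_meas hw0 hw1 hw_sym X U hX_meas hU_meas hX_law
    hU_law hindep Y hY
end

section
/- Optimality of the skewness correction: let π be a positive probability density on ℝ^d and q a positive density symmetric about μ. Among all skewing functions w with values in [0,1] satisfying w(θ) + w(2μ - θ) = 1, the Kullback–Leibler divergence KL(2 q w ∥ π) is minimized by w*(θ) = π(θ)/(π(θ) + π(2μ - θ)). -/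
/-!
Pair each θ with its reflection 2μ - θ. Since Lebesgue measure is invariant under this reflection,
each KL integral is half the integral of its symmetrization, so it suffices to compare the
symmetrized integrands pointwise. With c = 2 q θ, a = p θ, b = p (2μ - θ) and t = w θ, the
symmetrized integrand is c t log (c t / a) + c (1 - t) log (c (1 - t) / b), and the log-sum
inequality bounds it below by c log (c / (a + b)), which is exactly its value at t = a / (a + b).
-/

open MeasureTheory Real

lemma mul_log_add_sub_le_mul_log_div {u a r : ℝ} (hu : 0 ≤ u) (ha : 0 < a) (hr : 0 < r) :
    u * log r + u - a * r ≤ u * log (u / a) := by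
  rcases hu.eq_or_lt with rfl | hu
  · simp; positivity
  have h := one_sub_inv_le_log_of_pos (show 0 < u / (a * r) by positivity)
  rw [log_div hu.ne' (by positivity), log_mul ha.ne' hr.ne', inv_div] at h
  rw [log_div hu.ne' ha.ne']
  have hmul := mul_le_mul_of_nonneg_left h hu.le
  rw [mul_sub, mul_one, mul_div_cancel₀ _ hu.ne'] at hmul
  linarith

lemma add_mul_log_div_add_le {u v a b : ℝ} (hu : 0 ≤ u) (hv : 0 ≤ v) (ha : 0 < a) (hb : 0 < b) :
    (u + v) * log ((u + v) / (a + b)) ≤ u * log (u / a) + v * log (v / b) := by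
  rcases (add_nonneg hu hv).eq_or_lt with huv | huv
  · obtain ⟨rfl, rfl⟩ : u = 0 ∧ v = 0 := ⟨by linarith, by linarith⟩
    simp
  have hr : 0 < (u + v) / (a + b) := div_pos huv (add_pos ha hb)
  have hu' := mul_log_add_sub_le_mul_log_div hu ha hr
  have hv' := mul_log_add_sub_le_mul_log_div hv hb hr
  have hab : a * ((u + v) / (a + b)) + b * ((u + v) / (a + b)) = u + v := by
    field_simp
  linarith

lemma mul_log_div_add_mul_log_div_proportional_le {a b c t : ℝ} (ha : 0 < a) (hb : 0 < b) (hc : 0 ≤ c)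
    (ht0 : 0 ≤ t) (ht1 : t ≤ 1) :
    c * (a / (a + b)) * log (c * (a / (a + b)) / a) +
        c * (b / (b + a)) * log (c * (b / (b + a)) / b)
      ≤ c * t * log (c * t / a) + c * (1 - t) * log (c * (1 - t) / b) := by
  have hopt : c * (a / (a + b)) * log (c * (a / (a + b)) / a) +
      c * (b / (b + a)) * log (c * (b / (b + a)) / b) = c * log (c / (a + b)) := by
    have hca : c * (a / (a + b)) / a = c / (a + b) := by field_simp
    have hcb : c * (b / (b + a)) / b = c / (a + b) := by rw [add_comm b a]; field_simp
    rw [hca, hcb, add_comm b a, mul_assoc, mul_assoc, ← mul_add, ← add_mul, ← add_div,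
      div_self (by positivity), one_mul]
  have hsum := add_mul_log_div_add_le (mul_nonneg hc ht0) (mul_nonneg hc (sub_nonneg.2 ht1)) ha hb
  rw [← mul_add, add_sub_cancel, mul_one] at hsum
  linarith

lemma integral_le_integral_of_add_comp_sub_left_le {G : Type*} [MeasurableSpace G] [AddGroup G]
    [MeasurableAdd G] [MeasurableNeg G] {ν : Measure G} [ν.IsNegInvariant] [ν.IsAddLeftInvariant]
    {f g : G → ℝ} (hf : Integrable f ν) (hg : Integrable g ν) (a : G)
    (h : ∀ x, f x + f (a - x) ≤ g x + g (a - x)) :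
    ∫ x, f x ∂ν ≤ ∫ x, g x ∂ν := by
  have hmono : ∫ x, f x + f (a - x) ∂ν ≤ ∫ x, g x + g (a - x) ∂ν :=
    integral_mono (hf.add (hf.comp_sub_left a)) (hg.add (hg.comp_sub_left a)) h
  rw [integral_add hf (hf.comp_sub_left a), integral_add hg (hg.comp_sub_left a),
    integral_sub_left_eq_self, integral_sub_left_eq_self] at hmono
  linarith

theorem stmt_7_general {d : ℕ} (p q : (Fin d → ℝ) → ℝ) (μ : Fin d → ℝ)
    (hp_pos : ∀ θ, 0 < p θ)
    (hq_pos : ∀ θ, 0 < q θ)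
    (hq_sym : ∀ θ, q ((2 : ℝ) • μ - θ) = q θ)
    (w : (Fin d → ℝ) → ℝ)
    (hw0 : ∀ θ, 0 ≤ w θ) (hw1 : ∀ θ, w θ ≤ 1)
    (hw_sym : ∀ θ, w θ + w ((2 : ℝ) • μ - θ) = 1)
    (hint_star : Integrable (fun θ =>
      2 * q θ * (p θ / (p θ + p ((2 : ℝ) • μ - θ))) *
        Real.log (2 * q θ * (p θ / (p θ + p ((2 : ℝ) • μ - θ))) / p θ)))
    (hint_w : Integrable (fun θ => 2 * q θ * w θ * Real.log (2 * q θ * w θ / p θ))) :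
    (∫ θ, 2 * q θ * (p θ / (p θ + p ((2 : ℝ) • μ - θ))) *
        Real.log (2 * q θ * (p θ / (p θ + p ((2 : ℝ) • μ - θ))) / p θ))
      ≤ ∫ θ, 2 * q θ * w θ * Real.log (2 * q θ * w θ / p θ) := by
  refine integral_le_integral_of_add_comp_sub_left_le hint_star hint_w ((2 : ℝ) • μ) fun θ => ?_
  have hw_refl : w ((2 : ℝ) • μ - θ) = 1 - w θ := by linarith [hw_sym θ]
  simp only [sub_sub_cancel, hq_sym, hw_refl]
  exact mul_log_div_add_mul_log_div_proportional_le (hp_pos θ) (hp_pos _)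
    (mul_pos two_pos (hq_pos θ)).le (hw0 θ) (hw1 θ)

theorem stmt_7 {d : ℕ} (p q : (Fin d → ℝ) → ℝ) (μ : Fin d → ℝ)
    (hp_pos : ∀ θ, 0 < p θ) (hp_meas : Measurable p) (hp_int : ∫ θ, p θ = 1)
    (hq_pos : ∀ θ, 0 < q θ) (hq_meas : Measurable q) (hq_int : ∫ θ, q θ = 1)
    (hq_sym : ∀ θ, q ((2 : ℝ) • μ - θ) = q θ)
    (w : (Fin d → ℝ) → ℝ)
    (hw_meas : Measurable w) (hw0 : ∀ θ, 0 ≤ w θ) (hw1 : ∀ θ, w θ ≤ 1)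
    (hw_sym : ∀ θ, w θ + w ((2 : ℝ) • μ - θ) = 1)
    (hint_star : Integrable (fun θ =>
      2 * q θ * (p θ / (p θ + p ((2 : ℝ) • μ - θ))) *
        Real.log (2 * q θ * (p θ / (p θ + p ((2 : ℝ) • μ - θ))) / p θ)))
    (hint_w : Integrable (fun θ => 2 * q θ * w θ * Real.log (2 * q θ * w θ / p θ))) :
    (∫ θ, 2 * q θ * (p θ / (p θ + p ((2 : ℝ) • μ - θ))) *
        Real.log (2 * q θ * (p θ / (p θ + p ((2 : ℝ) • μ - θ))) / p θ))
      ≤ ∫ θ, 2 * q θ * w θ * Real.log (2 * q θ * w θ / p θ) :=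
  stmt_7_general p q μ hp_pos hq_pos hq_sym w hw0 hw1 hw_sym hint_star hint_w
end

section
/- Skew-symmetric correction preserves even moments about the symmetry point: if Y has density 2 q(θ) w(θ) with q symmetric about μ and w a valid skewing function, then for any measurable g: ℝ^d → ℝ satisfying g(2μ - θ) = g(θ) (even about μ) and integrable against q, E[g(Y)] = E_X[g(X)] where X ~ q. -/
open MeasureTheory

/-- Reflection `x ↦ c - x` preserves `μ` and `f`, so it turns `∫ f w` into `∫ f (1 - w)`. -/
theorem two_mul_integral_mul_eq_integral_of_add_reflect_eq_one {G : Type*} [MeasurableSpace G]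
    [AddGroup G] [MeasurableAdd G] [MeasurableNeg G] {μ : Measure G} [μ.IsNegInvariant]
    [μ.IsAddLeftInvariant] {f w : G → ℝ} (c : G) (hf : Integrable f μ)
    (hfw : Integrable (fun x => f x * w x) μ) (hf_sym : ∀ x, f (c - x) = f x)
    (hw_sym : ∀ x, w x + w (c - x) = 1) :
    2 * ∫ x, f x * w x ∂μ = ∫ x, f x ∂μ := by
  have h_reflect : ∫ x, f x * w (c - x) ∂μ = ∫ x, f x * w x ∂μ := by
    simpa only [hf_sym] using integral_sub_left_eq_self (fun x => f x * w x) μ c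
  have h_complement : ∫ x, f x * w (c - x) ∂μ = ∫ x, f x ∂μ - ∫ x, f x * w x ∂μ := by
    rw [← integral_sub hf hfw]
    congr 1 with x
    linear_combination f x * hw_sym x
  linarith

theorem stmt_9_general {d : ℕ} (q w g : (Fin d → ℝ) → ℝ) (μ : Fin d → ℝ)
    (hq_meas : Measurable q) (hq_nonneg : ∀ θ, 0 ≤ q θ)
    (hq_sym : ∀ θ, q ((2 : ℝ) • μ - θ) = q θ)
    (hw_meas : Measurable w) (hw0 : ∀ θ, 0 ≤ w θ) (hw1 : ∀ θ, w θ ≤ 1)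
    (hw_sym : ∀ θ, w θ + w ((2 : ℝ) • μ - θ) = 1)
    (hg_meas : Measurable g)
    (hg_sym : ∀ θ, g ((2 : ℝ) • μ - θ) = g θ)
    (hg_int : Integrable (fun θ => |g θ| * q θ)) :
    (∫ θ, g θ * (2 * q θ * w θ)) = ∫ θ, g θ * q θ := by
  have hgq : Integrable (fun θ => g θ * q θ) :=
    hg_int.mono' (hg_meas.mul hq_meas).aestronglyMeasurable <| ae_of_all _ fun θ => by
      rw [Real.norm_eq_abs, abs_mul, abs_of_nonneg (hq_nonneg θ)]
  have hgqw : Integrable (fun θ => g θ * q θ * w θ) :=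
    hgq.mul_bdd hw_meas.aestronglyMeasurable <| ae_of_all _ fun θ => by
      rw [Real.norm_eq_abs, abs_of_nonneg (hw0 θ)]
      exact hw1 θ
  calc (∫ θ, g θ * (2 * q θ * w θ)) = 2 * ∫ θ, g θ * q θ * w θ := by
        rw [← integral_const_mul]
        congr 1 with θ
        ring
    _ = ∫ θ, g θ * q θ :=
        two_mul_integral_mul_eq_integral_of_add_reflect_eq_one _ hgq hgqw
          (fun θ => by rw [hg_sym, hq_sym]) hw_sym

theorem stmt_9 {d : ℕ} (q w g : (Fin d → ℝ) → ℝ) (μ : Fin d → ℝ)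
    (hq_meas : Measurable q) (hq_nonneg : ∀ θ, 0 ≤ q θ)
    (hq_int : ∫ θ, q θ = 1)
    (hq_sym : ∀ θ, q ((2 : ℝ) • μ - θ) = q θ)
    (hw_meas : Measurable w) (hw0 : ∀ θ, 0 ≤ w θ) (hw1 : ∀ θ, w θ ≤ 1)
    (hw_sym : ∀ θ, w θ + w ((2 : ℝ) • μ - θ) = 1)
    (hg_meas : Measurable g)
    (hg_sym : ∀ θ, g ((2 : ℝ) • μ - θ) = g θ)
    (hg_int : Integrable (fun θ => |g θ| * q θ)) :
    (∫ θ, g θ * (2 * q θ * w θ)) = ∫ θ, g θ * q θ :=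
  stmt_9_general q w g μ hq_meas hq_nonneg hq_sym hw_meas hw0 hw1 hw_sym hg_meas hg_sym hg_int
end

section
/- Entropy of a skew-symmetric density relative to the baseline: if p_w(θ) = 2 q(θ) w(θ) with q symmetric about μ and w a valid skewing function, then the differential entropy satisfies H(p_w) = H(q) − log 2 − E_X[ w(X) log w(X) + (1 − w(X)) log(1 − w(X)) ], where X ~ q and H(p) = −∫ p log p. -/
/-!
Average the integrand of `H(p_w)` with its mirror image under `θ ↦ 2μ - θ`, which preserves
Lebesgue measure. By the symmetry of `q` and `w`, the two terms at a point are
`2q w log (2q w)` and `2q (1 - w) log (2q (1 - w))`; since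
`negMulLog (x * y) = y * negMulLog x + x * negMulLog y`, their sum is
`2q log (2q) + 2q (w log w + (1 - w) log (1 - w))`, and integrating gives the formula.
-/

open MeasureTheory Real

section Reflection

variable {G : Type*} [MeasurableSpace G] [AddGroup G] [MeasurableAdd G] [MeasurableNeg G]
  {μ : Measure G} [μ.IsAddLeftInvariant] [μ.IsNegInvariant]

theorem integral_eq_of_add_comp_sub_left {f g : G → ℝ} (a : G)
    (hf : Integrable f μ) (hfg : ∀ x, f x + f (a - x) = 2 * g x) :
    ∫ x, f x ∂μ = ∫ x, g x ∂μ := by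
  have h : 2 * ∫ x, f x ∂μ = 2 * ∫ x, g x ∂μ := calc
    2 * ∫ x, f x ∂μ = (∫ x, f x ∂μ) + ∫ x, f (a - x) ∂μ := by
      rw [integral_sub_left_eq_self f μ a]; ring
    _ = ∫ x, 2 * g x ∂μ := by
      rw [← integral_add hf (hf.comp_sub_left a)]; simp only [hfg]
    _ = 2 * ∫ x, g x ∂μ := integral_const_mul 2 _
  linarith

end Reflection

theorem mul_log_mul_add_mul_log_mul_one_sub (c w : ℝ) :
    c * w * log (c * w) + c * (1 - w) * log (c * (1 - w))
      = c * log c + (w * log w + (1 - w) * log (1 - w)) * c := by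
  have hsplit := fun y => negMulLog_mul c y
  simp only [negMulLog] at hsplit
  linear_combination -hsplit w - hsplit (1 - w)

theorem two_mul_mul_log_two_mul (x : ℝ) :
    2 * x * log (2 * x) = 2 * (x * log 2 + x * log x) := by
  have h := negMulLog_mul 2 x
  simp only [negMulLog] at h
  linear_combination -h

theorem stmt_15_general {d : ℕ} (q w : (Fin d → ℝ) → ℝ) (μ : Fin d → ℝ)
    (hq_int : ∫ θ, q θ = 1)
    (hq_sym : ∀ θ, q ((2 : ℝ) • μ - θ) = q θ)
    (hw_sym : ∀ θ, w θ + w ((2 : ℝ) • μ - θ) = 1)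
    (hH_pw : Integrable (fun θ => 2 * q θ * w θ * Real.log (2 * q θ * w θ)))
    (hH_q : Integrable (fun θ => q θ * Real.log (q θ)))
    (hH_bin : Integrable (fun θ =>
      (w θ * Real.log (w θ) + (1 - w θ) * Real.log (1 - w θ)) * q θ)) :
    (-∫ θ, 2 * q θ * w θ * Real.log (2 * q θ * w θ))
      = (-∫ θ, q θ * Real.log (q θ)) - Real.log 2
        - ∫ θ, (w θ * Real.log (w θ) + (1 - w θ) * Real.log (1 - w θ)) * q θ := by
  have hq : Integrable q := integrable_of_integral_eq_one hq_int
  have hq_log : Integrable fun θ => q θ * log 2 + q θ * log (q θ) :=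
    (hq.mul_const _).add hH_q
  have hpair : ∀ θ, 2 * q θ * w θ * log (2 * q θ * w θ)
      + 2 * q ((2 : ℝ) • μ - θ) * w ((2 : ℝ) • μ - θ)
        * log (2 * q ((2 : ℝ) • μ - θ) * w ((2 : ℝ) • μ - θ))
      = 2 * (q θ * log 2 + q θ * log (q θ)
        + (w θ * log (w θ) + (1 - w θ) * log (1 - w θ)) * q θ) := fun θ => by
    rw [hq_sym, show w ((2 : ℝ) • μ - θ) = 1 - w θ by linarith [hw_sym θ],
      mul_log_mul_add_mul_log_mul_one_sub, two_mul_mul_log_two_mul]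
    ring
  rw [integral_eq_of_add_comp_sub_left _ hH_pw hpair, integral_add hq_log hH_bin,
    integral_add (hq.mul_const _) hH_q, integral_mul_const, hq_int]
  ring

theorem stmt_15 {d : ℕ} (q w : (Fin d → ℝ) → ℝ) (μ : Fin d → ℝ)
    (hq_pos : ∀ θ, 0 < q θ) (hq_meas : Measurable q) (hq_int : ∫ θ, q θ = 1)
    (hq_sym : ∀ θ, q ((2 : ℝ) • μ - θ) = q θ)
    (hw_meas : Measurable w) (hw0 : ∀ θ, 0 < w θ) (hw1 : ∀ θ, w θ < 1)
    (hw_sym : ∀ θ, w θ + w ((2 : ℝ) • μ - θ) = 1)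
    (hH_pw : Integrable (fun θ => 2 * q θ * w θ * Real.log (2 * q θ * w θ)))
    (hH_q : Integrable (fun θ => q θ * Real.log (q θ)))
    (hH_bin : Integrable (fun θ =>
      (w θ * Real.log (w θ) + (1 - w θ) * Real.log (1 - w θ)) * q θ)) :
    (-∫ θ, 2 * q θ * w θ * Real.log (2 * q θ * w θ))
      = (-∫ θ, q θ * Real.log (q θ)) - Real.log 2
        - ∫ θ, (w θ * Real.log (w θ) + (1 - w θ) * Real.log (1 - w θ)) * q θ :=
  stmt_15_general q w μ hq_int hq_sym hw_sym hH_pw hH_q hH_bin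
end
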